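/- arXiv:1804.04740 — 3 statements merged into one kernel-verified Lean document; each statement's English description precedes it below -/
import Mathlib

section
/- For distinct points x, x' in ℝⁿ, the set A = {(ξ, t) ∈ Sⁿ⁻¹ × ℝ : x·ξ ≤ t ∧ x'·ξ ≥ t} is contractible. -/
open RealInnerProductSpace

lemma aux_contr {E : Type*} [NormedAddCommGroup E] [InnerProductSpace ℝ E]
    (x x' : E) (hxx : x ≠ x') :
    ContractibleSpace
      {p : (Metric.sphere (0 : E) 1) × ℝ //
        ⟪x, (p.1 : E)⟫ ≤ p.2 ∧ ⟪x', (p.1 : E)⟫ ≥ p.2} := by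
  rw [contractible_iff_id_nullhomotopic]
  set w : E := x' - x with hwdef
  have hw0 : w ≠ 0 := sub_ne_zero.mpr (Ne.symm hxx)
  have hwn : (0:ℝ) < ‖w‖ := norm_pos_iff.mpr hw0
  set ζ : E := ‖w‖⁻¹ • w with hζdef
  have hζ1 : ‖ζ‖ = 1 := by
    rw [hζdef, norm_smul, norm_inv, norm_norm, inv_mul_cancel₀ hwn.ne']
  have hwζ : ⟪w, ζ⟫ = ‖w‖ := by
    rw [hζdef, real_inner_smul_right, real_inner_self_eq_norm_mul_norm]
    field_simp
  have hζmem : ζ ∈ Metric.sphere (0:E) 1 := by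
    simp [mem_sphere_zero_iff_norm, hζ1]
  set A := {p : (Metric.sphere (0 : E) 1) × ℝ //
        ⟪x, (p.1 : E)⟫ ≤ p.2 ∧ ⟪x', (p.1 : E)⟫ ≥ p.2} with hA
  -- per-point data
  set s : unitInterval × A → ℝ := fun q => (q.1 : ℝ) with hsdef
  set ξ : unitInterval × A → E := fun q => ((q.2 : (Metric.sphere (0 : E) 1) × ℝ).1 : E) with hξdef
  set t : unitInterval × A → ℝ := fun q => (q.2 : (Metric.sphere (0 : E) 1) × ℝ).2 with htdef
  set v : unitInterval × A → E := fun q => (1 - s q) • ξ q + s q • ζ with hvdef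
  have hs0 : ∀ q, 0 ≤ s q := fun q => q.1.2.1
  have hs1 : ∀ q, s q ≤ 1 := fun q => q.1.2.2
  have hξ1 : ∀ q, ‖ξ q‖ = 1 := fun q => mem_sphere_zero_iff_norm.mp (q.2 : (Metric.sphere (0 : E) 1) × ℝ).1.2
  have htlo : ∀ q, ⟪x, ξ q⟫ ≤ t q := fun q => q.2.2.1
  have hthi : ∀ q, t q ≤ ⟪x', ξ q⟫ := fun q => q.2.2.2
  have hwξ : ∀ q, 0 ≤ ⟪w, ξ q⟫ := by
    intro q
    have : ⟪w, ξ q⟫ = ⟪x', ξ q⟫ - ⟪x, ξ q⟫ := by rw [hwdef, inner_sub_left]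
    have h1 := htlo q; have h2 := hthi q
    linarith
  have hζξ : ∀ q, 0 ≤ ⟪ζ, ξ q⟫ := by
    intro q
    rw [hζdef, real_inner_smul_left]
    exact mul_nonneg (inv_nonneg.mpr hwn.le) (hwξ q)
  have hv0 : ∀ q, v q ≠ 0 := by
    intro q hv
    have : ⟪v q, ξ q + ζ⟫ = 0 := by rw [hv, inner_zero_left]
    rw [hvdef] at this
    simp only [inner_add_left, inner_add_right, real_inner_smul_left] at this
    have e1 : ⟪ξ q, ξ q⟫ = 1 := by
      rw [real_inner_self_eq_norm_mul_norm, hξ1 q]; ring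
    have e2 : ⟪ζ, ζ⟫ = 1 := by
      rw [real_inner_self_eq_norm_mul_norm, hζ1]; ring
    have e3 : ⟪ξ q, ζ⟫ = ⟪ζ, ξ q⟫ := real_inner_comm _ _
    rw [e1, e2, e3] at this
    have h := hζξ q
    linarith
  have hvle : ∀ q, ‖v q‖ ≤ 1 := by
    intro q
    calc ‖v q‖ ≤ ‖(1 - s q) • ξ q‖ + ‖s q • ζ‖ := norm_add_le _ _
      _ = |1 - s q| * 1 + |s q| * 1 := by rw [norm_smul, norm_smul, hξ1 q, hζ1]; simp [Real.norm_eq_abs]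
      _ = (1 - s q) + s q := by
          rw [abs_of_nonneg (by linarith [hs1 q]), abs_of_nonneg (hs0 q)]; ring
      _ = 1 := by ring
  have hvpos : ∀ q, (0:ℝ) < ‖v q‖ := fun q => norm_pos_iff.mpr (hv0 q)
  have hinv1 : ∀ q, (1:ℝ) ≤ ‖v q‖⁻¹ := fun q => (one_le_inv₀ (hvpos q)).mpr (hvle q)
  -- the retracted sphere point
  set u : unitInterval × A → E := fun q => ‖v q‖⁻¹ • v q with hudef
  have humem : ∀ q, u q ∈ Metric.sphere (0:E) 1 := by
    intro q
    rw [mem_sphere_zero_iff_norm, hudef]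
    simp only
    rw [norm_smul, norm_inv, norm_norm, inv_mul_cancel₀ (hvpos q).ne']
  have hwv : ∀ q, (1 - s q) * ⟪w, ξ q⟫ ≤ ⟪w, v q⟫ := by
    intro q
    rw [hvdef]
    simp only [inner_add_right, real_inner_smul_right, hwζ]
    nlinarith [hs0 q, hwn, hwξ q]
  have hwu : ∀ q, (1 - s q) * ⟪w, ξ q⟫ ≤ ⟪w, u q⟫ := by
    intro q
    rw [hudef]
    simp only [real_inner_smul_right]
    have h1 := hwv q
    have h2 : 0 ≤ ⟪w, v q⟫ := le_trans (mul_nonneg (by linarith [hs1 q]) (hwξ q)) h1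
    calc (1 - s q) * ⟪w, ξ q⟫ ≤ ⟪w, v q⟫ := h1
      _ = 1 * ⟪w, v q⟫ := (one_mul _).symm
      _ ≤ ‖v q‖⁻¹ * ⟪w, v q⟫ := mul_le_mul_of_nonneg_right (hinv1 q) h2
  -- new t-coordinate
  set τ : unitInterval × A → ℝ := fun q => (1 - s q) * (t q - ⟪x, ξ q⟫) + ⟪x, u q⟫ with hτdef
  have hcon : ∀ q, ⟪x, u q⟫ ≤ τ q ∧ ⟪x', u q⟫ ≥ τ q := by
    intro q
    constructor
    · simp only [hτdef]
      have : 0 ≤ (1 - s q) * (t q - ⟪x, ξ q⟫) :=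
        mul_nonneg (by linarith [hs1 q]) (by linarith [htlo q])
      linarith
    · simp only [hτdef]
      have h1 : ⟪x', u q⟫ - ⟪x, u q⟫ = ⟪w, u q⟫ := by rw [hwdef, inner_sub_left]
      have h2 : (1 - s q) * (t q - ⟪x, ξ q⟫) ≤ (1 - s q) * ⟪w, ξ q⟫ := by
        apply mul_le_mul_of_nonneg_left _ (by linarith [hs1 q])
        have : ⟪w, ξ q⟫ = ⟪x', ξ q⟫ - ⟪x, ξ q⟫ := by rw [hwdef, inner_sub_left]
        have := hthi q
        linarith
      have h3 := hwu q
      linarith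
  -- continuity
  have hscont : Continuous s := continuous_subtype_val.comp continuous_fst
  have hpcont : Continuous fun q : unitInterval × A => (q.2 : (Metric.sphere (0 : E) 1) × ℝ) :=
    continuous_subtype_val.comp continuous_snd
  have hξcont : Continuous ξ := continuous_subtype_val.comp (continuous_fst.comp hpcont)
  have htcont : Continuous t := continuous_snd.comp hpcont
  have hvcont : Continuous v := by
    apply Continuous.add
    · exact ((continuous_const.sub hscont).smul hξcont)
    · exact hscont.smul continuous_const
  have hucont : Continuous u := (hvcont.norm.inv₀ (fun q => (hvpos q).ne')).smul hvcont
  have hτcont : Continuous τ := by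
    apply Continuous.add
    · exact (continuous_const.sub hscont).mul (htcont.sub (Continuous.inner continuous_const hξcont))
    · exact Continuous.inner continuous_const hucont
  refine ⟨⟨(⟨ζ, hζmem⟩, ⟪x, ζ⟫), le_refl _, ?_⟩, ⟨⟨⟨fun q => ⟨(⟨u q, humem q⟩, τ q), hcon q⟩, ?_⟩, ?_, ?_⟩⟩⟩
  · show ⟪x', ζ⟫ ≥ ⟪x, ζ⟫
    have h : ⟪x', ζ⟫ - ⟪x, ζ⟫ = ⟪w, ζ⟫ := by rw [hwdef, inner_sub_left]
    rw [hwζ] at h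
    linarith
  · exact Continuous.subtype_mk ((hucont.subtype_mk _).prodMk hτcont) _
  · intro a
    apply Subtype.ext
    have hq : s (0, a) = 0 := rfl
    have hv : v (0, a) = ξ (0, a) := by rw [hvdef]; simp [hq]
    have hnv : ‖v (0, a)‖ = 1 := by rw [hv, hξ1]
    have hu : u (0, a) = ξ (0, a) := by simp only [hudef, hnv, hv, hξ1, hζ1, inv_one, one_smul]
    have hτ : τ (0, a) = t (0, a) := by simp only [hτdef, hq, hu]; ring
    apply Prod.ext
    · apply Subtype.ext
      exact hu
    · exact hτ
  · intro a
    apply Subtype.ext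
    have hq : s (1, a) = 1 := rfl
    have hv : v (1, a) = ζ := by rw [hvdef]; simp [hq]
    have hnv : ‖v (1, a)‖ = 1 := by rw [hv, hζ1]
    have hu : u (1, a) = ζ := by simp only [hudef, hnv, hv, hξ1, hζ1, inv_one, one_smul]
    have hτ : τ (1, a) = ⟪x, ζ⟫ := by simp only [hτdef, hq, hu]; ring
    apply Prod.ext
    · apply Subtype.ext
      exact hu
    · exact hτ

/-- For distinct x, x' ∈ ℝⁿ (n ≥ 2), the set
A = {(ξ,t) ∈ Sⁿ⁻¹ × ℝ : x·ξ ≤ t ∧ x'·ξ ≥ t} is contractible. -/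
theorem stmt_2 (n : ℕ) (hn : 2 ≤ n) (x x' : EuclideanSpace ℝ (Fin n)) (hxx : x ≠ x') :
    ContractibleSpace
      {p : (Metric.sphere (0 : EuclideanSpace ℝ (Fin n)) 1) × ℝ //
        ⟪x, (p.1 : EuclideanSpace ℝ (Fin n))⟫ ≤ p.2 ∧
        ⟪x', (p.1 : EuclideanSpace ℝ (Fin n))⟫ ≥ p.2} := by
  exact aux_contr x x' hxx
end

section
/- Let X and Y be finite types, K : X × Y → ℤ, K' : Y × X → ℤ, and λ, μ integers such that for all x, x' in X, ∑_y K(x,y)·K'(y,x') = (μ−λ)·δ_{x,x'} + λ, where δ is the Kronecker delta. Then for every h : X → ℤ and every x' ∈ X, ∑_y (∑_x h(x)·K(x,y))·K'(y,x') = (μ−λ)·h(x') + λ·∑_x h(x). -/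
/-- The discrete Schapira inversion identity. -/
theorem stmt_5 (X Y : Type*) [Fintype X] [Fintype Y] [DecidableEq X]
    (K : X × Y → ℤ) (K' : Y × X → ℤ) (lam mu : ℤ)
    (hinv : ∀ x x' : X, ∑ y : Y, K (x, y) * K' (y, x') =
      (mu - lam) * (if x = x' then 1 else 0) + lam) :
    ∀ (h : X → ℤ) (x' : X),
      ∑ y : Y, (∑ x : X, h x * K (x, y)) * K' (y, x') =
        (mu - lam) * h x' + lam * ∑ x : X, h x := by
  intro h x'
  have : ∑ y : Y, (∑ x : X, h x * K (x, y)) * K' (y, x')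
      = ∑ x : X, h x * ∑ y : Y, K (x, y) * K' (y, x') := by
    simp only [Finset.sum_mul, Finset.mul_sum, mul_assoc]
    rw [Finset.sum_comm]
  rw [this]
  simp only [hinv]
  rw [Finset.sum_congr rfl (fun x _ => mul_add (h x) _ _), Finset.sum_add_distrib]
  simp [Finset.mul_sum, Finset.sum_mul, mul_comm, mul_ite, Finset.sum_ite_eq,
    mul_left_comm]
end

section
/- Let X and Y be finite types and K : X × Y → ℤ a kernel such that the functions x ↦ K(x,·) from X to (Y → ℤ) satisfy: there exist λ ≠ μ with ∑_y K(x,y)·K'(y,x') = (μ−λ)δ_{x,x'} + λ for some K'. Then any two functions h₁, h₂ : X → ℤ with R_K h₁ = R_K h₂ are equal. -/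
/-- If the kernel K admits a dual kernel K' satisfying Schapira's condition with λ ≠ μ
(and μ − λ + λ·|X| ≠ 0), then the Radon transform with kernel K distinguishes functions. -/
theorem stmt_6 (X Y : Type*) [Fintype X] [Fintype Y] [DecidableEq X]
    (K : X × Y → ℤ)
    (hK : ∃ (K' : Y × X → ℤ) (lam mu : ℤ), lam ≠ mu ∧
      mu - lam + lam * (Fintype.card X : ℤ) ≠ 0 ∧
      ∀ x x' : X, ∑ y : Y, K (x, y) * K' (y, x') =
        (mu - lam) * (if x = x' then 1 else 0) + lam)
    (h₁ h₂ : X → ℤ)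
    (heq : (fun y : Y => ∑ x : X, h₁ x * K (x, y)) =
           (fun y : Y => ∑ x : X, h₂ x * K (x, y))) :
    h₁ = h₂ := by
  obtain ⟨K', lam, mu, hne, hcard, hKK⟩ := hK
  set g : X → ℤ := fun x => h₁ x - h₂ x with hg
  have hg0 : ∀ y : Y, ∑ x : X, g x * K (x, y) = 0 := by
    intro y
    have := congrFun heq y
    simp only [hg, sub_mul, Finset.sum_sub_distrib]
    omega
  set S : ℤ := ∑ x : X, g x with hS
  have key : ∀ x' : X, (mu - lam) * g x' + lam * S = 0 := by
    intro x'
    have h1 : ∑ y : Y, (∑ x : X, g x * K (x, y)) * K' (y, x') = 0 := by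
      apply Finset.sum_eq_zero
      intro y _
      rw [hg0 y, zero_mul]
    have h2 : ∑ y : Y, (∑ x : X, g x * K (x, y)) * K' (y, x')
        = ∑ x : X, g x * ((mu - lam) * (if x = x' then 1 else 0) + lam) := by
      simp only [Finset.sum_mul]
      rw [Finset.sum_comm]
      apply Finset.sum_congr rfl
      intro x _
      rw [← hKK x x', Finset.mul_sum]
      apply Finset.sum_congr rfl
      intro y _
      ring
    have h3 : ∑ x : X, g x * ((mu - lam) * (if x = x' then 1 else 0) + lam)
        = (mu - lam) * g x' + lam * S := by
      simp only [mul_add, Finset.sum_add_distrib, Finset.mul_sum]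
      rw [Finset.sum_congr rfl (fun x _ => by split <;> ring :
        ∀ x ∈ Finset.univ, g x * ((mu - lam) * (if x = x' then 1 else 0))
          = (if x = x' then (mu - lam) * g x else 0))]
      simp [hS, Finset.mul_sum, mul_comm]
    rw [h2, h3] at h1
    exact h1
    -- done
  have hSsum : ((mu - lam) + lam * (Fintype.card X : ℤ)) * S = 0 := by
    have := Finset.sum_congr rfl (fun x' (_ : x' ∈ (Finset.univ : Finset X)) => key x')
    simp only [Finset.sum_add_distrib, Finset.sum_const, Finset.card_univ,
      Finset.sum_eq_zero_iff] at this
    have h4 : ∑ x' : X, ((mu - lam) * g x' + lam * S) = 0 := by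
      rw [Finset.sum_eq_zero]; intro x _; exact key x
    have h5 : ∑ x' : X, ((mu - lam) * g x' + lam * S)
        = (mu - lam) * S + (Fintype.card X : ℤ) * (lam * S) := by
      rw [Finset.sum_add_distrib, ← Finset.mul_sum, ← hS]
      simp [Finset.sum_const, Finset.card_univ, nsmul_eq_mul]
    rw [h5] at h4
    linarith [h4]
  have hS0 : S = 0 := by
    rcases mul_eq_zero.mp hSsum with h | h
    · exact absurd (by linarith [h] : mu - lam + lam * (Fintype.card X : ℤ) = 0) hcard
    · exact h
  funext x
  have := key x
  rw [hS0] at this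
  have hml : mu - lam ≠ 0 := fun h => hne (by omega)
  have : g x = 0 := by
    rcases mul_eq_zero.mp (by linarith : (mu - lam) * g x = 0) with h | h
    · exact absurd h hml
    · exact h
  simp only [hg] at this
  omega
end
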